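/- arXiv:2511.04881 — 2 statements merged into one kernel-verified Lean document; each statement's English description precedes it below -/
import Mathlib

section
/- For a strictly positive invertible D ∈ M_n(ℂ) and μ > 0, the map x ↦ ∫₀^∞ (s + μ⁻¹D)⁻¹ x (s + μD)⁻¹ ds is a two-sided inverse of K_{D,μ}(x) = ∫₀¹ μ^{1-2s} D^s x D^{1-s} ds. -/
open MeasureTheory
open scoped ComplexOrder

attribute [local instance] Matrix.frobeniusNormedAddCommGroup Matrix.frobeniusNormedSpace

/-- The weight transform `K_{D,μ}(x) = ∫₀¹ μ^(1-2s) D^s x D^(1-s) ds`,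
where `D = exp L` and `D^s = exp (s L)`. -/
noncomputable def Kmap {n : ℕ} (L : Matrix (Fin n) (Fin n) ℂ) (μ : ℝ)
    (x : Matrix (Fin n) (Fin n) ℂ) : Matrix (Fin n) (Fin n) ℂ :=
  ∫ s in (0:ℝ)..1,
    (μ ^ (1 - 2*s)) • (NormedSpace.exp (s • L) * x * NormedSpace.exp ((1-s) • L))

/-- The candidate inverse `x ↦ ∫₀^∞ (s + μ⁻¹D)⁻¹ x (s + μD)⁻¹ ds`. -/
noncomputable def Kinv {n : ℕ} (D : Matrix (Fin n) (Fin n) ℂ) (μ : ℝ)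
    (x : Matrix (Fin n) (Fin n) ℂ) : Matrix (Fin n) (Fin n) ℂ :=
  ∫ s in Set.Ioi (0:ℝ),
    (s • (1 : Matrix (Fin n) (Fin n) ℂ) + μ⁻¹ • D)⁻¹ * x
      * (s • (1 : Matrix (Fin n) (Fin n) ℂ) + μ • D)⁻¹


open MeasureTheory Real Set Filter Topology

namespace KAux
variable {n : ℕ} (U : Matrix (Fin n) (Fin n) ℂ)

lemma cI_eq_of_ne (p q : ℝ) (h : p ≠ q) :
    ∫ s in (0:ℝ)..1, Real.exp (q + s * (p - q)) = (Real.exp p - Real.exp q) / (p - q) := by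
  have hne : p - q ≠ 0 := sub_ne_zero.mpr h
  have hd : ∀ s : ℝ, HasDerivAt (fun t : ℝ => Real.exp (q + t * (p - q)) / (p - q))
      (Real.exp (q + s * (p - q))) s := by
    intro s
    have h1 : HasDerivAt (fun t : ℝ => q + t * (p - q)) (p - q) s := by
      simpa using ((hasDerivAt_id s).mul_const (p - q)).const_add q
    have h2 := (h1.exp).div_const (p - q)
    simpa [mul_div_assoc, mul_div_cancel_right₀ _ hne] using h2
  rw [intervalIntegral.integral_eq_sub_of_hasDerivAt (fun s _ => hd s)
    ((Real.continuous_exp.comp (by continuity)).intervalIntegrable 0 1)]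
  have e1 : q + 1 * (p - q) = p := by ring
  have e0 : q + 0 * (p - q) = q := by ring
  rw [e1, e0, div_sub_div_same]

lemma deriv_pack (P Q : ℝ) (hP : 0 < P) (hQ : 0 < Q) :
    ∃ g : ℝ → ℝ, (∀ x ∈ Ici (0:ℝ), HasDerivAt g (((x + P) * (x + Q))⁻¹) x) ∧
      Tendsto g atTop (𝓝 0) ∧
      g 0 = -(if P = Q then P⁻¹ else (Real.log Q - Real.log P) / (Q - P)) := by
  rcases eq_or_ne P Q with rfl | hPQ
  · refine ⟨fun x => -(x + P)⁻¹, ?_, ?_, by simp⟩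
    · intro x hx
      have hx' : (0:ℝ) ≤ x := hx
      have hx0 : x + P ≠ 0 := by positivity
      have := (((hasDerivAt_id x).add_const P).inv hx0).neg
      refine this.congr_deriv ?_
      simp only [id]
      field_simp
    · have : Tendsto (fun x : ℝ => (x + P)⁻¹) atTop (𝓝 0) :=
        (tendsto_atTop_add_const_right _ P tendsto_id).inv_tendsto_atTop
      simpa using this.neg
  · refine ⟨fun x => (Real.log (x + P) - Real.log (x + Q)) / (Q - P), ?_, ?_, by
      rw [if_neg hPQ]
      show (Real.log (0+P) - Real.log (0+Q)) / (Q - P) = _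
      rw [zero_add, zero_add]; ring⟩
    · intro x hx
      have hx0 : (0:ℝ) ≤ x := hx
      have hxP : (0:ℝ) < x + P := by positivity
      have hxQ : (0:ℝ) < x + Q := by positivity
      have h1 : HasDerivAt (fun t : ℝ => Real.log (t + P)) (1 / (x + P)) x := by
        simpa using ((hasDerivAt_id x).add_const P).log hxP.ne'
      have h2 : HasDerivAt (fun t : ℝ => Real.log (t + Q)) (1 / (x + Q)) x := by
        simpa using ((hasDerivAt_id x).add_const Q).log hxQ.ne'
      have h3 := (h1.sub h2).div_const (Q - P)
      refine h3.congr_deriv ?_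
      have hQP : Q - P ≠ 0 := sub_ne_zero.mpr (Ne.symm hPQ)
      field_simp
      try ring
    · have hinv : Tendsto (fun x : ℝ => (x + Q)⁻¹) atTop (𝓝 0) :=
        (tendsto_atTop_add_const_right _ Q tendsto_id).inv_tendsto_atTop
      have h2 : Tendsto (fun x : ℝ => 1 + (P - Q) * (x + Q)⁻¹) atTop (𝓝 1) := by
        simpa using tendsto_const_nhds.add (hinv.const_mul (P - Q))
      have h3 : Tendsto (fun x : ℝ => (x + P) / (x + Q)) atTop (𝓝 1) := by
        apply h2.congr'
        filter_upwards [Filter.eventually_gt_atTop 0] with x hx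
        have hxQ : x + Q ≠ 0 := by positivity
        field_simp
        try ring
      have h4 : Tendsto (fun x : ℝ => Real.log ((x + P) / (x + Q))) atTop (𝓝 0) := by
        have := (Real.continuousAt_log one_ne_zero).tendsto.comp h3
        rw [Real.log_one] at this
        exact this
      have h5 : Tendsto (fun x : ℝ => Real.log (x + P) - Real.log (x + Q)) atTop (𝓝 0) := by
        apply h4.congr'
        filter_upwards [Filter.eventually_gt_atTop 0] with x hx
        rw [Real.log_div (by positivity) (by positivity)]
      simpa using h5.div_const (Q - P)

lemma kI_integrable (P Q : ℝ) (hP : 0 < P) (hQ : 0 < Q) :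
    IntegrableOn (fun s : ℝ => ((s + P) * (s + Q))⁻¹) (Ioi 0) := by
  obtain ⟨g, hg, ht, -⟩ := deriv_pack P Q hP hQ
  exact integrableOn_Ioi_deriv_of_nonneg' hg
    (fun x hx => by have : (0:ℝ) < x := hx; positivity) ht

lemma kI_val (P Q : ℝ) (hP : 0 < P) (hQ : 0 < Q) :
    ∫ s in Ioi (0:ℝ), ((s + P) * (s + Q))⁻¹
      = if P = Q then P⁻¹ else (Real.log Q - Real.log P) / (Q - P) := by
  obtain ⟨g, hg, ht, h0⟩ := deriv_pack P Q hP hQ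
  rw [integral_Ioi_of_hasDerivAt_of_nonneg' hg
    (fun x hx => by have : (0:ℝ) < x := hx; positivity) ht, h0, zero_sub, neg_neg]

noncomputable def cI (p q : ℝ) : ℝ := ∫ s in (0:ℝ)..1, Real.exp (q + s * (p - q))

noncomputable def kI (p q : ℝ) : ℝ :=
  ∫ s in Ioi (0:ℝ), ((s + Real.exp p) * (s + Real.exp q))⁻¹

lemma cI_mul_kI (p q : ℝ) : cI p q * kI p q = 1 := by
  rcases eq_or_ne p q with rfl | h
  · have hc : cI p p = Real.exp p := by
      simp [cI]
    have hk : kI p p = (Real.exp p)⁻¹ := by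
      rw [kI, kI_val _ _ (Real.exp_pos p) (Real.exp_pos p), if_pos rfl]
    rw [hc, hk, mul_inv_cancel₀ (Real.exp_pos p).ne']
  · have hee : Real.exp p ≠ Real.exp q := fun hc => h (Real.exp_injective hc)
    have hc : cI p q = (Real.exp p - Real.exp q) / (p - q) := cI_eq_of_ne p q h
    have hk : kI p q = (q - p) / (Real.exp q - Real.exp p) := by
      rw [kI, kI_val _ _ (Real.exp_pos p) (Real.exp_pos q), if_neg hee,
        Real.log_exp, Real.log_exp]
    rw [hc, hk]
    have h1 : p - q ≠ 0 := sub_ne_zero.mpr h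
    have h2 : Real.exp q - Real.exp p ≠ 0 := sub_ne_zero.mpr (Ne.symm hee)
    field_simp
    ring


variable {n : ℕ} (U : Matrix (Fin n) (Fin n) ℂ)

lemma conj_cancel (hU2 : star U * U = 1) (M : Matrix (Fin n) (Fin n) ℂ) :
    star U * (U * M) = M := by rw [← Matrix.mul_assoc, hU2, Matrix.one_mul]

lemma conj3 (hU2 : star U * U = 1) (a y b : Matrix (Fin n) (Fin n) ℂ) :
    (U * a * star U) * (U * y * star U) * (U * b * star U) = U * (a * y * b) * star U := by
  simp only [Matrix.mul_assoc, conj_cancel U hU2]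

lemma sum_entry (f : Fin n → Fin n → ℂ) :
    ∑ p : Fin n × Fin n, f p.1 p.2 • Matrix.single p.1 p.2 (1:ℂ)
      = Matrix.of f := by
  ext i j
  rw [Matrix.sum_apply]
  rw [Fintype.sum_prod_type]
  simp [Matrix.single, Matrix.smul_apply, ite_and, Finset.sum_ite_eq']

lemma resum (hU2 : star U * U = 1) (f : Fin n → Fin n → ℝ) (y : Matrix (Fin n) (Fin n) ℂ) :
    ∑ p : Fin n × Fin n,
        f p.1 p.2 • (y p.1 p.2 • (U * Matrix.single p.1 p.2 (1:ℂ) * star U))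
      = U * Matrix.of (fun i j => f i j • y i j) * star U := by
  have h1 : ∀ p : Fin n × Fin n,
      f p.1 p.2 • (y p.1 p.2 • (U * Matrix.single p.1 p.2 (1:ℂ) * star U))
        = U * ((f p.1 p.2 • y p.1 p.2) • Matrix.single p.1 p.2 (1:ℂ)) * star U := by
    intro p
    rw [Matrix.mul_smul, Matrix.smul_mul, smul_assoc]
  simp only [h1]
  rw [← Finset.sum_mul, ← Finset.mul_sum]
  congr 2
  exact sum_entry (fun i j => f i j • y i j)

lemma diag_sandwich (hU2 : star U * U = 1) (a b : Fin n → ℂ) (y : Matrix (Fin n) (Fin n) ℂ) :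
    (U * Matrix.diagonal a * star U) * (U * y * star U) * (U * Matrix.diagonal b * star U)
      = U * Matrix.of (fun i j => a i * y i j * b j) * star U := by
  rw [conj3 U hU2]
  congr 2
  ext i j
  rw [Matrix.mul_diagonal, Matrix.diagonal_mul]
  rfl


lemma exp_smul_eq (hU1 : U * star U = 1) (hU2 : star U * U = 1)
    (lam : Fin n → ℝ) (L : Matrix (Fin n) (Fin n) ℂ)
    (hLd : L = U * Matrix.diagonal (fun i => (lam i : ℂ)) * star U) (s : ℝ) :
    NormedSpace.exp (s • L)
      = U * Matrix.diagonal (fun i => ((Real.exp (s * lam i) : ℝ) : ℂ)) * star U := by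
  have hinv : U⁻¹ = star U := Matrix.inv_eq_left_inv hU2
  have hUnit : IsUnit U := ⟨⟨U, star U, hU1, hU2⟩, rfl⟩
  have h1 : s • L = U * Matrix.diagonal (fun i => ((s * lam i : ℝ) : ℂ)) * star U := by
    rw [hLd, ← Matrix.smul_mul, ← Matrix.mul_smul]
    congr 2
    ext i j
    by_cases hij : i = j
    · subst hij
      simp [Complex.real_smul]
    · simp [Matrix.diagonal_apply_ne _ hij]
  have hde : (NormedSpace.exp (fun i => ((s * lam i : ℝ) : ℂ)) : Fin n → ℂ)
      = fun i => ((Real.exp (s * lam i) : ℝ) : ℂ) := by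
    funext i
    simp [Pi.exp_def, ← Complex.exp_eq_exp_ℂ, Complex.ofReal_exp]
  rw [h1, ← hinv, Matrix.exp_conj U _ hUnit, Matrix.exp_diagonal, hde, hinv]

lemma res_eq (hU1 : U * star U = 1) (hU2 : star U * U = 1)
    (w : Fin n → ℝ) (hw : ∀ i, 0 < w i) (s ν : ℝ) (hs : 0 < s) (hν : 0 < ν) :
    (s • (1 : Matrix (Fin n) (Fin n) ℂ)
        + ν • (U * Matrix.diagonal (fun i => ((w i : ℝ) : ℂ)) * star U))⁻¹
      = U * Matrix.diagonal (fun i => (((s + ν * w i)⁻¹ : ℝ) : ℂ)) * star U := by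
  have hpos : ∀ i, (0:ℝ) < s + ν * w i := fun i => by have := hw i; positivity
  have hsum : s • (1 : Matrix (Fin n) (Fin n) ℂ)
        + ν • (U * Matrix.diagonal (fun i => ((w i : ℝ) : ℂ)) * star U)
      = U * Matrix.diagonal (fun i => (((s + ν * w i : ℝ)) : ℂ)) * star U := by
    rw [show (1 : Matrix (Fin n) (Fin n) ℂ)
        = U * Matrix.diagonal (fun _ : Fin n => (1:ℂ)) * star U by
      rw [Matrix.diagonal_one, Matrix.mul_one, hU1]]
    rw [← Matrix.smul_mul, ← Matrix.mul_smul, ← Matrix.smul_mul, ← Matrix.mul_smul,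
      ← Matrix.add_mul, ← Matrix.mul_add]
    congr 2
    ext i j
    by_cases hij : i = j
    · subst hij
      simp only [Matrix.add_apply, Matrix.smul_apply, Matrix.diagonal_apply_eq,
        Complex.real_smul]
      push_cast
      ring
    · simp [Matrix.one_apply_ne hij, Matrix.diagonal_apply_ne _ hij]
  rw [hsum]
  apply Matrix.inv_eq_right_inv
  have hdd : (Matrix.diagonal fun i => ((s + ν * w i : ℝ) : ℂ))
      * (Matrix.diagonal fun i => (((s + ν * w i)⁻¹ : ℝ) : ℂ)) = 1 := by
    rw [Matrix.diagonal_mul_diagonal]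
    have hfun : (fun i => ((s + ν * w i : ℝ) : ℂ) * (((s + ν * w i)⁻¹ : ℝ) : ℂ))
        = fun _ : Fin n => (1:ℂ) := by
      funext i
      rw [← Complex.ofReal_mul, mul_inv_cancel₀ (hpos i).ne', Complex.ofReal_one]
    rw [hfun, Matrix.diagonal_one]
  calc (U * Matrix.diagonal (fun i => ((s + ν * w i : ℝ) : ℂ)) * star U)
        * (U * Matrix.diagonal (fun i => (((s + ν * w i)⁻¹ : ℝ) : ℂ)) * star U)
      = U * ((Matrix.diagonal fun i => ((s + ν * w i : ℝ) : ℂ))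
          * (Matrix.diagonal fun i => (((s + ν * w i)⁻¹ : ℝ) : ℂ))) * star U := by
        simp only [Matrix.mul_assoc, conj_cancel U hU2]
    _ = 1 := by rw [hdd, Matrix.mul_one, hU1]


lemma scalar_id (μ : ℝ) (hμ : 0 < μ) (a b s : ℝ) :
    μ ^ (1 - 2*s) * (Real.exp (s * a) * Real.exp ((1 - s) * b))
      = Real.exp ((b + Real.log μ) + s * ((a - Real.log μ) - (b + Real.log μ))) := by
  rw [Real.rpow_def_of_pos hμ, ← Real.exp_add, ← Real.exp_add]
  congr 1
  ring

lemma Kmap_conj (hU1 : U * star U = 1) (hU2 : star U * U = 1)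
    (lam : Fin n → ℝ) (L : Matrix (Fin n) (Fin n) ℂ)
    (hLd : L = U * Matrix.diagonal (fun i => (lam i : ℂ)) * star U)
    (μ : ℝ) (hμ : 0 < μ) (y : Matrix (Fin n) (Fin n) ℂ) :
    Kmap L μ (U * y * star U)
      = U * Matrix.of (fun i j =>
          cI (lam i - Real.log μ) (lam j + Real.log μ) • y i j) * star U := by
  have hpt : ∀ s : ℝ,
      (μ ^ (1 - 2*s)) • (NormedSpace.exp (s • L) * (U * y * star U)
          * NormedSpace.exp ((1-s) • L))
      = ∑ p : Fin n × Fin n,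
          Real.exp ((lam p.2 + Real.log μ)
              + s * ((lam p.1 - Real.log μ) - (lam p.2 + Real.log μ)))
            • (y p.1 p.2 • (U * Matrix.single p.1 p.2 (1:ℂ) * star U)) := by
    intro s
    rw [exp_smul_eq U hU1 hU2 lam L hLd s, exp_smul_eq U hU1 hU2 lam L hLd (1-s),
      diag_sandwich U hU2,
      resum U hU2 (fun i j => Real.exp ((lam j + Real.log μ)
        + s * ((lam i - Real.log μ) - (lam j + Real.log μ)))) y,
      ← Matrix.smul_mul, ← Matrix.mul_smul]
    congr 2
    ext i j
    simp only [Matrix.smul_apply, Matrix.of_apply]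
    rw [Complex.real_smul, Complex.real_smul, ← scalar_id μ hμ (lam i) (lam j) s]
    push_cast
    ring
  unfold Kmap
  rw [intervalIntegral.integral_congr (fun s _ => hpt s)]
  rw [intervalIntegral.integral_finset_sum]
  swap
  · intro p _
    apply Continuous.intervalIntegrable
    fun_prop
  have h2 : ∀ p ∈ (Finset.univ : Finset (Fin n × Fin n)),
      (∫ s in (0:ℝ)..1,
          Real.exp ((lam p.2 + Real.log μ)
              + s * ((lam p.1 - Real.log μ) - (lam p.2 + Real.log μ)))
            • (y p.1 p.2 • (U * Matrix.single p.1 p.2 (1:ℂ) * star U)))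
        = cI (lam p.1 - Real.log μ) (lam p.2 + Real.log μ)
            • (y p.1 p.2 • (U * Matrix.single p.1 p.2 (1:ℂ) * star U)) := by
    intro p _
    rw [intervalIntegral.integral_smul_const]
    rfl
  rw [Finset.sum_congr rfl h2]
  exact resum U hU2 (fun i j => cI (lam i - Real.log μ) (lam j + Real.log μ)) y

lemma Kinv_conj (hU1 : U * star U = 1) (hU2 : star U * U = 1)
    (lam : Fin n → ℝ) (D : Matrix (Fin n) (Fin n) ℂ)
    (hDd : D = U * Matrix.diagonal (fun i => ((Real.exp (lam i) : ℝ) : ℂ)) * star U)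
    (μ : ℝ) (hμ : 0 < μ) (y : Matrix (Fin n) (Fin n) ℂ) :
    Kinv D μ (U * y * star U)
      = U * Matrix.of (fun i j =>
          kI (lam i - Real.log μ) (lam j + Real.log μ) • y i j) * star U := by
  have hpt : ∀ s ∈ Set.Ioi (0:ℝ),
      (s • (1 : Matrix (Fin n) (Fin n) ℂ) + μ⁻¹ • D)⁻¹ * (U * y * star U)
          * (s • (1 : Matrix (Fin n) (Fin n) ℂ) + μ • D)⁻¹
      = ∑ p : Fin n × Fin n,
          ((s + Real.exp (lam p.1 - Real.log μ)) * (s + Real.exp (lam p.2 + Real.log μ)))⁻¹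
            • (y p.1 p.2 • (U * Matrix.single p.1 p.2 (1:ℂ) * star U)) := by
    intro s hs
    have hs0 : (0:ℝ) < s := hs
    have he1 : ∀ i, s + μ⁻¹ * Real.exp (lam i) = s + Real.exp (lam i - Real.log μ) := by
      intro i
      rw [Real.exp_sub, Real.exp_log hμ, div_eq_inv_mul]
    have he2 : ∀ i, s + μ * Real.exp (lam i) = s + Real.exp (lam i + Real.log μ) := by
      intro i
      rw [Real.exp_add, Real.exp_log hμ, mul_comm]
    rw [hDd, res_eq U hU1 hU2 _ (fun i => Real.exp_pos (lam i)) s μ⁻¹ hs0 (by positivity),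
      res_eq U hU1 hU2 _ (fun i => Real.exp_pos (lam i)) s μ hs0 hμ,
      diag_sandwich U hU2,
      resum U hU2 (fun i j =>
        ((s + Real.exp (lam i - Real.log μ)) * (s + Real.exp (lam j + Real.log μ)))⁻¹) y]
    congr 2
    ext i j
    simp only [Matrix.of_apply]
    rw [he1 i, he2 j, Complex.real_smul]
    push_cast [mul_inv]
    ring
  unfold Kinv
  rw [MeasureTheory.setIntegral_congr_fun measurableSet_Ioi hpt]
  rw [MeasureTheory.integral_finset_sum _ (fun p _ =>
    ((kI_integrable _ _ (Real.exp_pos _) (Real.exp_pos _)).smul_const _))]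
  have h2 : ∀ p ∈ (Finset.univ : Finset (Fin n × Fin n)),
      (∫ s in Set.Ioi (0:ℝ),
          ((s + Real.exp (lam p.1 - Real.log μ)) * (s + Real.exp (lam p.2 + Real.log μ)))⁻¹
            • (y p.1 p.2 • (U * Matrix.single p.1 p.2 (1:ℂ) * star U)))
        = kI (lam p.1 - Real.log μ) (lam p.2 + Real.log μ)
            • (y p.1 p.2 • (U * Matrix.single p.1 p.2 (1:ℂ) * star U)) := by
    intro p _
    rw [integral_smul_const]
    rfl
  rw [Finset.sum_congr rfl h2]
  exact resum U hU2 (fun i j => kI (lam i - Real.log μ) (lam j + Real.log μ)) y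

end KAux

/-- `Kinv` is a two-sided inverse of `K_{D,μ}`. -/
theorem Kinv_twoSided_inverse_of_Kmap {n : ℕ} (D L : Matrix (Fin n) (Fin n) ℂ)
    (hL : L.IsHermitian) (hD : D.PosDef) (hexp : NormedSpace.exp L = D)
    (μ : ℝ) (hμ : 0 < μ) :
    ∀ x : Matrix (Fin n) (Fin n) ℂ,
      Kinv D μ (Kmap L μ x) = x ∧ Kmap L μ (Kinv D μ x) = x := by
  intro x
  set U : Matrix (Fin n) (Fin n) ℂ := (hL.eigenvectorUnitary : Matrix (Fin n) (Fin n) ℂ) with hUdef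
  have hU2 : star U * U = 1 := hL.eigenvectorUnitary.2.1
  have hU1 : U * star U = 1 := hL.eigenvectorUnitary.2.2
  set lam : Fin n → ℝ := hL.eigenvalues with hlam
  have hLd : L = U * Matrix.diagonal (fun i => (lam i : ℂ)) * star U := by
    convert hL.spectral_theorem using 3
    simp [Unitary.conjStarAlgAut_apply, hUdef, hlam, Function.comp_def]
  have hDd : D = U * Matrix.diagonal (fun i => ((Real.exp (lam i) : ℝ) : ℂ)) * star U := by
    rw [← hexp, ← one_smul ℝ L, KAux.exp_smul_eq U hU1 hU2 lam L hLd 1]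
    simp only [one_mul]
  have hx : U * (star U * x * U) * star U = x := by
    have h1 : U * (star U * x * U) * star U = (U * star U) * x * (U * star U) := by
      simp only [Matrix.mul_assoc]
    rw [h1, hU1, Matrix.one_mul, Matrix.mul_one]
  set y : Matrix (Fin n) (Fin n) ℂ := star U * x * U with hy
  constructor
  · rw [← hx, KAux.Kmap_conj U hU1 hU2 lam L hLd μ hμ y,
      KAux.Kinv_conj U hU1 hU2 lam D hDd μ hμ _]
    congr 2
    ext i j
    simp only [Matrix.of_apply]
    rw [smul_smul, mul_comm, KAux.cI_mul_kI, one_smul]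
  · rw [← hx, KAux.Kinv_conj U hU1 hU2 lam D hDd μ hμ y,
      KAux.Kmap_conj U hU1 hU2 lam L hLd μ hμ _]
    congr 2
    ext i j
    simp only [Matrix.of_apply]
    rw [smul_smul, KAux.cI_mul_kI, one_smul]
end

section
/- If D is a strictly positive density matrix in M_n(ℂ) and μ > 0, then for every x ∈ M_n(ℂ) one has tr(x* K_{D,μ}(x)) ≥ 0, i.e. K_{D,μ} is a positive semidefinite operator with respect to the trace inner product. -/
open MeasureTheory
open scoped ComplexOrder

attribute [local instance] Matrix.frobeniusNormedAddCommGroup Matrix.frobeniusNormedSpace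
attribute [local instance] Matrix.frobeniusNormedRing Matrix.frobeniusNormedAlgebra

lemma trace_nonneg' {n : ℕ} {A : Matrix (Fin n) (Fin n) ℂ} (hA : A.PosSemidef) :
    0 ≤ A.trace := by
  exact hA.trace_nonneg

lemma smul_herm {n : ℕ} {M : Matrix (Fin n) (Fin n) ℂ} (hM : M.IsHermitian) (r : ℝ) :
    (r • M).IsHermitian := by
  show (r • M).conjTranspose = r • M
  rw [Matrix.conjTranspose_smul, hM.eq, star_trivial]

lemma exp_herm_posSemidef {n : ℕ} {M : Matrix (Fin n) (Fin n) ℂ} (hM : M.IsHermitian) :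
    (NormedSpace.exp M).PosSemidef := by
  have hsplit : M = (1/2 : ℝ) • M + (1/2 : ℝ) • M := by
    rw [← add_smul]; norm_num
  have hherm : ((1/2 : ℝ) • M).IsHermitian := smul_herm hM _
  have hexp := Matrix.exp_add_of_commute ((1/2 : ℝ) • M) ((1/2 : ℝ) • M)
    (Commute.refl _)
  rw [← hsplit] at hexp
  have hH : (NormedSpace.exp ((1/2 : ℝ) • M)).conjTranspose
      = NormedSpace.exp ((1/2 : ℝ) • M) := by
    rw [← Matrix.exp_conjTranspose, hherm.eq]
  have hps := Matrix.posSemidef_conjTranspose_mul_self (NormedSpace.exp ((1/2 : ℝ) • M))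
  rw [hH] at hps
  rwa [hexp]

lemma trace_conj_nonneg {n : ℕ} {A B : Matrix (Fin n) (Fin n) ℂ}
    (hA : A.PosSemidef) (hB : B.PosSemidef) (x : Matrix (Fin n) (Fin n) ℂ) :
    0 ≤ (x.conjTranspose * (A * x * B)).trace := by
  open scoped MatrixOrder in
  set C := CFC.sqrt B with hC
  open scoped MatrixOrder in
  have hBC : B = C * C := (CFC.sqrt_mul_sqrt_self B hB.nonneg).symm
  open scoped MatrixOrder in
  have hCH : C.conjTranspose = C := (Matrix.nonneg_iff_posSemidef.mp (CFC.sqrt_nonneg B)).1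
  have e1 : x.conjTranspose * (A * x * B) = (x.conjTranspose * (A * x * C)) * C := by
    rw [hBC]; noncomm_ring
  rw [e1, Matrix.trace_mul_comm]
  have e2 : C * (x.conjTranspose * (A * x * C)) = (x * C).conjTranspose * A * (x * C) := by
    rw [Matrix.conjTranspose_mul, hCH]; noncomm_ring
  rw [e2]
  exact trace_nonneg' (hA.conjTranspose_mul_mul_same _)

/-- `K_{D,μ}` is positive semidefinite for the trace inner product:
`tr(x* K_{D,μ}(x)) ≥ 0` when `D` is a strictly positive density matrix. -/
theorem Kmap_posSemidef {n : ℕ} (D L : Matrix (Fin n) (Fin n) ℂ)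
    (hL : L.IsHermitian) (hD : D.PosDef) (htr : D.trace = 1)
    (hexp : NormedSpace.exp L = D) (μ : ℝ) (hμ : 0 < μ) :
    ∀ x : Matrix (Fin n) (Fin n) ℂ,
      0 ≤ (x.conjTranspose * Kmap L μ x).trace := by
  intro x
  set f : ℝ → Matrix (Fin n) (Fin n) ℂ := fun s =>
    (μ ^ (1 - 2*s)) • (NormedSpace.exp (s • L) * x * NormedSpace.exp ((1-s) • L)) with hf
  have hcont : Continuous f := by
    apply Continuous.smul (f := fun s : ℝ => μ ^ (1 - 2*s))
    · have h1 : Continuous (fun y : ℝ => μ ^ y) :=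
        continuous_iff_continuousAt.2 fun y => Real.continuousAt_const_rpow hμ.ne'
      exact h1.comp (by fun_prop)
    · exact ((NormedSpace.exp_continuous.comp (continuous_id.smul continuous_const)).matrix_mul
        continuous_const).matrix_mul
        (NormedSpace.exp_continuous.comp ((continuous_const.sub continuous_id).smul
          continuous_const))
  letI : ENormedAddMonoid (Matrix (Fin n) (Fin n) ℂ) :=
    NormedAddCommGroup.toENormedAddCommMonoid.toENormedAddMonoid
  have hint : IntervalIntegrable f volume 0 1 := hcont.intervalIntegrable _ _
  let T : Matrix (Fin n) (Fin n) ℂ →L[ℂ] ℂ :=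
    LinearMap.toContinuousLinearMap
      ((Matrix.traceLinearMap (Fin n) ℂ ℂ).comp (LinearMap.mulLeft ℂ x.conjTranspose))
  have hTdef : ∀ y, T y = (x.conjTranspose * y).trace := fun y => rfl
  have key : (x.conjTranspose * Kmap L μ x).trace = ∫ s in (0:ℝ)..1,
      (x.conjTranspose * f s).trace := by
    rw [← hTdef, Kmap, ← hf]
    exact (T.intervalIntegral_comp_comm hint).symm.trans
      (intervalIntegral.integral_congr fun s _ => hTdef (f s))
  have hnn : ∀ s : ℝ, 0 ≤ (x.conjTranspose * f s).trace := by
    intro s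
    have hA : (NormedSpace.exp (s • L)).PosSemidef := exp_herm_posSemidef (smul_herm hL s)
    have hB : (NormedSpace.exp ((1-s) • L)).PosSemidef :=
      exp_herm_posSemidef (smul_herm hL (1-s))
    have h0 := trace_conj_nonneg hA hB x
    rw [hf]
    simp only [Matrix.mul_smul, Matrix.trace_smul]
    rw [Complex.real_smul]
    exact mul_nonneg (by exact_mod_cast Real.rpow_nonneg hμ.le _) h0
  rw [key]
  have heq : ∀ s : ℝ, (x.conjTranspose * f s).trace
      = (((x.conjTranspose * f s).trace.re : ℝ) : ℂ) := by
    intro s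
    have h := hnn s
    rw [Complex.nonneg_iff] at h
    exact (Complex.ext (by simp) (by simp [h.2])).symm
  rw [intervalIntegral.integral_congr (fun s _ => heq s), intervalIntegral.integral_ofReal]
  rw [Complex.zero_le_real]
  apply intervalIntegral.integral_nonneg zero_le_one
  intro u _
  exact (Complex.nonneg_iff.mp (hnn u)).1
end
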